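/- arXiv:1801.02394 — 2 statements merged into one kernel-verified Lean document; each statement's English description precedes it below -/
import Mathlib

section
/- Let Ξ, Ξ', Ψ, Ψ' ∈ [0,∞)^N and w ≥ 0 satisfy: (a) Ξ'_{[i]} = Ξ_{[i+1]} for i = 1,…,N−1 and Ξ'_{[N]} = w; (b) Ψ_n ≥ Ψ'_n ≥ w and Ξ_n ≥ Ξ'_n ≥ w for all n; (c) Ψ'_{[i]} ≥ Ψ_{[i+1]} for i = 1,…,N−1; (d) Ξ_{[i]} ≤ Ψ_{[i]} for all i. Then Ξ'_{[i]} ≤ Ψ'_{[i]} for all i = 1,…,N. -/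
/-- The `i`-th largest component (0-indexed) of a vector `x : Fin N → ℝ`. -/
noncomputable def sortDesc {N : ℕ} (x : Fin N → ℝ) : Fin N → ℝ :=
  fun i => x (Tuple.sort x i.rev)

/-- deterministic content of Lemma 4 (Inductive Comparison for
Theorem 3), with `Ξ, Ξ'` the ages of served information in MASIF-LGFS and
`Ψ, Ψ'` the ages in an arbitrary policy. -/
theorem stmt_16 {N : ℕ} (hN : 1 ≤ N) (Ξ Ξ' Ψ Ψ' : Fin N → ℝ) (w : ℝ)
    (hw : 0 ≤ w)
    (ha1 : ∀ i : Fin N, (h : i.val + 1 < N) →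
      sortDesc Ξ' i = sortDesc Ξ ⟨i.val + 1, h⟩)
    (ha2 : sortDesc Ξ' ⟨N - 1, by omega⟩ = w)
    (hb1 : ∀ n : Fin N, Ψ' n ≤ Ψ n) (hb2 : ∀ n : Fin N, w ≤ Ψ' n)
    (hb3 : ∀ n : Fin N, Ξ' n ≤ Ξ n) (hb4 : ∀ n : Fin N, w ≤ Ξ' n)
    (hc : ∀ i : Fin N, (h : i.val + 1 < N) →
      sortDesc Ψ ⟨i.val + 1, h⟩ ≤ sortDesc Ψ' i)
    (hd : ∀ i : Fin N, sortDesc Ξ i ≤ sortDesc Ψ i) :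
    ∀ i : Fin N, sortDesc Ξ' i ≤ sortDesc Ψ' i := by
  intro i
  by_cases h : i.val + 1 < N
  · calc sortDesc Ξ' i = sortDesc Ξ ⟨i.val + 1, h⟩ := ha1 i h
      _ ≤ sortDesc Ψ ⟨i.val + 1, h⟩ := hd _
      _ ≤ sortDesc Ψ' i := hc i h
  · have hi : i = ⟨N - 1, by omega⟩ := by
      apply Fin.ext; have := i.isLt; simp; omega
    rw [hi, ha2]
    exact hb2 _
end

section
/- Let N ≥ 2 and suppose at every delivery event the scheduler reduces the maximum component of the age vector to a common floor value. Formally, let w_1 ≤ w_2 ≤ … ≤ w_k be floor values and define vectors Δ^{(0)}, Δ^{(1)}, …, Δ^{(k)} ∈ [0,∞)^N and Ψ^{(0)}, …, Ψ^{(k)} ∈ [0,∞)^N recursively, where Δ^{(j)} is obtained from Δ^{(j−1)} by replacing its maximum component by w_j, and Ψ^{(j)} is obtained from Ψ^{(j−1)} by decreasing exactly one component to some value ≥ w_j, with all components of Ψ^{(j−1)} at least w_j. If Δ^{(0)}_{[i]} ≤ Ψ^{(0)}_{[i]} for all i, then Δ^{(k)}_{[i]} ≤ Ψ^{(k)}_{[i]}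 for all i = 1,…,N. -/
/-- number of components exceeding `t` -/
noncomputable def cnt {N : ℕ} (x : Fin N → ℝ) (t : ℝ) : ℕ :=
  (Finset.univ.filter (fun n => t < x n)).card

lemma sortDesc_antitone {N : ℕ} (x : Fin N → ℝ) : Antitone (sortDesc x) := by
  intro i j hij
  exact Tuple.monotone_sort x (show j.rev ≤ i.rev from Fin.rev_le_rev.mpr hij)

lemma cnt_sortDesc {N : ℕ} (x : Fin N → ℝ) (t : ℝ) : cnt (sortDesc x) t = cnt x t := by
  unfold cnt sortDesc
  exact Finset.card_bij (fun i _ => Tuple.sort x i.rev)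
    (by intro a ha
        simp only [Finset.mem_filter, Finset.mem_univ, true_and] at ha ⊢
        exact ha)
    (by intro a _ b _ h
        have := (Tuple.sort x).injective h
        exact Fin.rev_injective this)
    (by intro b hb
        refine ⟨((Tuple.sort x).symm b).rev, ?_, by simp⟩
        simp only [Finset.mem_filter, Finset.mem_univ, true_and, Fin.rev_rev,
          Equiv.apply_symm_apply] at *
        exact hb)

lemma antitone_le_iff_cnt {N : ℕ} {a : Fin N → ℝ} (ha : Antitone a) (i : Fin N) (t : ℝ) :
    a i ≤ t ↔ cnt a t ≤ (i : ℕ) := by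
  constructor
  · intro h
    have hsub : (Finset.univ.filter (fun n => t < a n)) ⊆
        Finset.univ.filter (fun n : Fin N => n < i) := by
      intro n hn
      simp only [Finset.mem_filter, Finset.mem_univ, true_and] at *
      by_contra hc
      push_neg at hc
      exact absurd (le_trans (ha (show i ≤ n from hc)) h) (not_le.mpr hn)
    calc cnt a t ≤ (Finset.univ.filter (fun n : Fin N => n < i)).card :=
          Finset.card_le_card hsub
      _ = (i : ℕ) := by
          rw [show Finset.univ.filter (fun n : Fin N => n < i) = Finset.Iio i from
            Finset.ext (fun n => by simp)]
          exact Fin.card_Iio i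
  · intro h
    by_contra hc
    push_neg at hc
    have hsub : (Finset.univ.filter (fun n : Fin N => n ≤ i)) ⊆
        Finset.univ.filter (fun n => t < a n) := by
      intro n hn
      simp only [Finset.mem_filter, Finset.mem_univ, true_and] at *
      exact lt_of_lt_of_le hc (ha hn)
    have : (i : ℕ) + 1 ≤ cnt a t := by
      calc (i : ℕ) + 1 = (Finset.univ.filter (fun n : Fin N => n ≤ i)).card := by
            rw [show Finset.univ.filter (fun n : Fin N => n ≤ i) = Finset.Iic i from
              Finset.ext (fun n => by simp)]
            exact (Fin.card_Iic i).symm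
        _ ≤ cnt a t := Finset.card_le_card hsub
    omega

lemma sorted_dom_iff_cnt {N : ℕ} (x y : Fin N → ℝ) :
    (∀ i, sortDesc x i ≤ sortDesc y i) ↔ (∀ t, cnt x t ≤ cnt y t) := by
  constructor
  · intro h t
    rw [← cnt_sortDesc x t, ← cnt_sortDesc y t]
    apply Finset.card_le_card
    intro n hn
    simp only [Finset.mem_filter, Finset.mem_univ, true_and] at *
    exact lt_of_lt_of_le hn (h n)
  · intro h i
    rw [antitone_le_iff_cnt (sortDesc_antitone x) i, cnt_sortDesc]
    calc cnt x (sortDesc y i) ≤ cnt y (sortDesc y i) := h _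
      _ = cnt (sortDesc y) (sortDesc y i) := (cnt_sortDesc y _).symm
      _ ≤ (i : ℕ) := (antitone_le_iff_cnt (sortDesc_antitone y) i _).mp le_rfl

lemma step_cnt {N : ℕ} (ω : ℝ) (Δ Δ' Ψ Ψ' : Fin N → ℝ) (m m' : Fin N)
    (hmax : ∀ n, Δ n ≤ Δ m) (hΔ' : Δ' = Function.update Δ m ω)
    (hfloor : ∀ n, ω ≤ Ψ n)
    (h1 : Ψ' m' ≤ Ψ m') (h2 : ω ≤ Ψ' m') (h3 : ∀ n, n ≠ m' → Ψ' n = Ψ n)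
    (h : ∀ t, cnt Δ t ≤ cnt Ψ t) : ∀ t, cnt Δ' t ≤ cnt Ψ' t := by
  intro t
  by_cases ht : t < ω
  · have : cnt Ψ' t = N := by
      unfold cnt
      rw [Finset.filter_true_of_mem, Finset.card_univ, Fintype.card_fin]
      intro n _
      by_cases hn : n = m'
      · subst hn; exact lt_of_lt_of_le ht h2
      · rw [h3 n hn]; exact lt_of_lt_of_le ht (hfloor n)
    rw [this]
    exact (Finset.card_filter_le _ _).trans (by simp)
  · push_neg at ht
    set S := Finset.univ.filter (fun n => t < Δ n) with hS
    set T := Finset.univ.filter (fun n => t < Ψ n) with hT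
    by_cases hm : m ∈ S
    · have hsub : Finset.univ.filter (fun n => t < Δ' n) ⊆ S.erase m := by
        intro n hn
        simp only [Finset.mem_filter, Finset.mem_univ, true_and] at hn
        have hne : n ≠ m := by
          intro hnm; subst hnm
          rw [hΔ', Function.update_self] at hn
          exact absurd hn (not_lt.mpr ht)
        rw [hΔ', Function.update_of_ne hne] at hn
        exact Finset.mem_erase.mpr ⟨hne, Finset.mem_filter.mpr ⟨Finset.mem_univ n, hn⟩⟩
      have hsub2 : T.erase m' ⊆ Finset.univ.filter (fun n => t < Ψ' n) := by
        intro n hn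
        obtain ⟨hne, hn⟩ := Finset.mem_erase.mp hn
        rw [hT, Finset.mem_filter] at hn
        simp only [Finset.mem_filter, Finset.mem_univ, true_and]
        rw [h3 n hne]; exact hn.2
      calc cnt Δ' t ≤ (S.erase m).card := Finset.card_le_card hsub
        _ = S.card - 1 := Finset.card_erase_of_mem hm
        _ ≤ T.card - 1 := Nat.sub_le_sub_right (h t) 1
        _ ≤ (T.erase m').card := Finset.pred_card_le_card_erase
        _ ≤ cnt Ψ' t := Finset.card_le_card hsub2
    · have : cnt Δ' t = 0 := by
        unfold cnt
        rw [Finset.card_eq_zero, Finset.filter_eq_empty_iff]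
        intro n _
        rw [hS, Finset.mem_filter, not_and] at hm
        have hm := not_lt.mp (hm (Finset.mem_univ m))
        by_cases hn : n = m
        · subst hn; rw [hΔ', Function.update_self]; exact not_lt.mpr ht
        · rw [hΔ', Function.update_of_ne hn]; exact not_lt.mpr ((hmax n).trans hm)
      simp [this]

/-- inductive sample-path comparison over a finite sequence of
delivery events. At the `j`-th event (with non-decreasing floor values `w j`),
`Δ` has its maximum component replaced by `w j`, while `Ψ` has exactly one
component decreased to a value `≥ w j`, all components of the previous `Ψ`
being at least `w j`. Sorted domination at step `0` propagates to step `k`. -/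
theorem stmt_17 {N : ℕ} (hN : 2 ≤ N) (k : ℕ)
    (w : Fin k → ℝ) (hwmono : Monotone w)
    (Δ Ψ : Fin (k + 1) → Fin N → ℝ)
    (hΔpos : ∀ j n, 0 ≤ Δ j n) (hΨpos : ∀ j n, 0 ≤ Ψ j n)
    (hΔstep : ∀ j : Fin k, ∃ m : Fin N,
      (∀ n, Δ j.castSucc n ≤ Δ j.castSucc m) ∧
      Δ j.succ = Function.update (Δ j.castSucc) m (w j))
    (hΨfloor : ∀ j : Fin k, ∀ n, w j ≤ Ψ j.castSucc n)
    (hΨstep : ∀ j : Fin k, ∃ m : Fin N,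
      Ψ j.succ m ≤ Ψ j.castSucc m ∧ w j ≤ Ψ j.succ m ∧
      ∀ n : Fin N, n ≠ m → Ψ j.succ n = Ψ j.castSucc n)
    (hinit : ∀ i : Fin N, sortDesc (Δ 0) i ≤ sortDesc (Ψ 0) i) :
    ∀ i : Fin N, sortDesc (Δ (Fin.last k)) i ≤ sortDesc (Ψ (Fin.last k)) i := by
  have key : ∀ j : Fin (k + 1), ∀ t, cnt (Δ j) t ≤ cnt (Ψ j) t := by
    intro j
    induction j using Fin.induction with
    | zero => exact (sorted_dom_iff_cnt _ _).mp hinit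
    | succ j ih =>
      obtain ⟨m, hmax, hΔ'⟩ := hΔstep j
      obtain ⟨m', h1, h2, h3⟩ := hΨstep j
      exact step_cnt (w j) (Δ j.castSucc) (Δ j.succ) (Ψ j.castSucc) (Ψ j.succ) m m'
        hmax hΔ' (hΨfloor j) h1 h2 h3 ih
  exact (sorted_dom_iff_cnt _ _).mpr (key (Fin.last k))
end
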